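/- arXiv:2204.08869 — 2 statements merged into one kernel-verified Lean document; each statement's English description precedes it below -/
import Mathlib

section
/- Let (A,B) be a controllable pair with A ∈ ℝ^{n×n}, B ∈ ℝ^{n×m}, let T₀ > 0, and let W = ∫₀^{T₀} e^{-At} B Bᵀ e^{-Aᵀt} dt. Then the matrix A - B Bᵀ W^{-1} is stable, i.e., every eigenvalue of A - B Bᵀ W^{-1} has strictly negative real part. -/
open Matrix MeasureTheory

def ctrbMat {n m : ℕ} (A : Matrix (Fin n) (Fin n) ℝ) (B : Matrix (Fin n) (Fin m) ℝ) :
    Matrix (Fin n) (Fin n × Fin m) ℝ :=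
  fun i p => (A ^ (p.1 : ℕ) * B) i p.2

noncomputable def gramian {n m : ℕ} (A : Matrix (Fin n) (Fin n) ℝ)
    (B : Matrix (Fin n) (Fin m) ℝ) (T₀ : ℝ) : Matrix (Fin n) (Fin n) ℝ :=
  fun i j => ∫ t in (0:ℝ)..T₀,
    (NormedSpace.exp ((-t) • A) * B * Bᵀ * NormedSpace.exp ((-t) • Aᵀ)) i j

/-- A real square matrix is (Hurwitz) stable if all of its complex eigenvalues
have strictly negative real part. -/
def IsStableMatrix {n : ℕ} (M : Matrix (Fin n) (Fin n) ℝ) : Prop :=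
  ∀ (μ : ℂ) (v : Fin n → ℂ), v ≠ 0 →
    (M.map (Complex.ofReal)) *ᵥ v = μ • v → μ.re < 0

/-!
The Gramian `W` is positive definite: `yᵀ W y = ∫₀^T₀ ‖yᵀ e^{-tA} B‖² dt`, and if this vanishes
then `t ↦ yᵀ e^{-tA} B` vanishes on `[0, T₀]`, so all its derivatives `(-1)ᵏ yᵀ e^{-tA} Aᵏ B`
vanish and the nonzero vector `yᵀ e^{-tA}` annihilates the controllability matrix.
Differentiating the integrand gives the Lyapunov identity
`A W + W Aᵀ = B Bᵀ - e^{-T₀A} B Bᵀ e^{-T₀Aᵀ}`, so `M = A - B Bᵀ W⁻¹` satisfies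
`M W + W Mᵀ = -Q` with `Q = B Bᵀ + e^{-T₀A} B Bᵀ e^{-T₀Aᵀ} ⪰ 0`.
If `M v = μ v` and `x = W⁻¹ v`, then `2 Re μ · x* W x = -x* Q x ≤ 0`; equality would force
`Q x = 0`, hence `Bᵀ x = 0` and `Aᵀ x = -μ x`, which the Hautus test excludes for a
controllable pair.
-/

open scoped ComplexOrder

theorem Matrix.eq_zero_of_vecMul_eq_zero_of_rank_eq {K m ι : Type*} [Field K] [Fintype m]
    [Fintype ι] {C : Matrix m ι K} (hC : C.rank = Fintype.card m) {w : m → K}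
    (hw : w ᵥ* C = 0) : w = 0 := by
  have hli : LinearIndependent K C.row :=
    linearIndependent_iff_card_eq_finrank_span.mpr (hC ▸ C.rank_eq_finrank_span_row)
  funext i
  exact Fintype.linearIndependent_iff.mp hli w (by simpa [row, ← vecMul_eq_sum] using hw) i

theorem Matrix.lyapunov_sub_mul_nonsing_inv {K ι : Type*} [CommRing K] [Fintype ι]
    [DecidableEq ι] {A W C R : Matrix ι ι K} (hW : IsUnit W.det) (hWt : Wᵀ = W) (hCt : Cᵀ = C)
    (h : A * W + W * Aᵀ = C - R) :
    (A - C * W⁻¹) * W + W * (A - C * W⁻¹)ᵀ = -(C + R) := by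
  have hWinv : (W⁻¹)ᵀ = W⁻¹ := by rw [transpose_nonsing_inv, hWt]
  rw [transpose_sub, transpose_mul, hWinv, hCt, Matrix.sub_mul, Matrix.mul_sub,
    Matrix.mul_assoc, nonsing_inv_mul _ hW, ← Matrix.mul_assoc W, mul_nonsing_inv _ hW,
    Matrix.mul_one, Matrix.one_mul]
  calc A * W - C + (W * Aᵀ - C) = (A * W + W * Aᵀ) - C - C := by abel
    _ = -(C + R) := by rw [h]; abel

theorem Matrix.PosSemidef.mulVec_eq_zero_of_add_mulVec_eq_zero {𝕜 ι : Type*} [RCLike 𝕜]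
    [Fintype ι] {P R : Matrix ι ι 𝕜} (hP : P.PosSemidef) (hR : R.PosSemidef) {x : ι → 𝕜}
    (h : (P + R) *ᵥ x = 0) : P *ᵥ x = 0 := by
  rw [← hP.dotProduct_mulVec_zero_iff]
  have hsum : star x ⬝ᵥ P *ᵥ x + star x ⬝ᵥ R *ᵥ x = 0 := by
    rw [← dotProduct_add, ← add_mulVec, h, dotProduct_zero]
  exact ((add_eq_zero_iff_of_nonneg (hP.dotProduct_mulVec_nonneg x)
    (hR.dotProduct_mulVec_nonneg x)).1 hsum).1

theorem Matrix.star_dotProduct_conjTranspose_mulVec {𝕜 ι : Type*} [RCLike 𝕜] [Fintype ι]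
    (N : Matrix ι ι 𝕜) (x : ι → 𝕜) :
    star x ⬝ᵥ Nᴴ *ᵥ x = star (star x ⬝ᵥ N *ᵥ x) := by
  rw [dotProduct_mulVec, ← star_mulVec, star_dotProduct]

theorem Matrix.re_lt_zero_of_lyapunov {𝕜 ι : Type*} [RCLike 𝕜] [Fintype ι] [DecidableEq ι]
    {M W Q : Matrix ι ι 𝕜} (hW : W.PosDef) (hQ : Q.PosSemidef) (hMWQ : M * W + W * Mᴴ = -Q)
    (hobs : ∀ (c : 𝕜) (x : ι → 𝕜), Mᴴ *ᵥ x = c • x → Q *ᵥ x = 0 → x = 0)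
    {μ : 𝕜} {v : ι → 𝕜} (hv : v ≠ 0) (hMv : M *ᵥ v = μ • v) : RCLike.re μ < 0 := by
  have hWdet : IsUnit W.det := (isUnit_iff_isUnit_det W).mp hW.isUnit
  obtain ⟨x, rfl⟩ : ∃ x, W *ᵥ x = v :=
    ⟨W⁻¹ *ᵥ v, by rw [mulVec_mulVec, mul_nonsing_inv _ hWdet, one_mulVec]⟩
  have hx : x ≠ 0 := by rintro rfl; simp at hv
  set s := star x ⬝ᵥ W *ᵥ x
  have hMW : star x ⬝ᵥ (M * W) *ᵥ x = μ * s := by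
    rw [← mulVec_mulVec, hMv, dotProduct_smul, smul_eq_mul]
  have hWM : star x ⬝ᵥ (W * Mᴴ) *ᵥ x = star (μ * s) := by
    rw [← hMW, ← star_dotProduct_conjTranspose_mulVec, conjTranspose_mul, hW.isHermitian.eq]
  have hQx : RCLike.re (star x ⬝ᵥ Q *ᵥ x) = -(2 * RCLike.re μ * RCLike.re s) := by
    have hs : RCLike.im s = 0 := hW.isHermitian.im_star_dotProduct_mulVec_self x
    rw [← neg_neg Q, ← hMWQ, neg_mulVec, add_mulVec, dotProduct_neg, dotProduct_add, hMW, hWM]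
    simp only [RCLike.star_def, map_neg, map_add, RCLike.conj_re, RCLike.mul_re, hs, mul_zero,
      sub_zero]
    ring
  by_contra! hμ
  have hQ0 : Q *ᵥ x = 0 := by
    rw [← hQ.dotProduct_mulVec_zero_iff]
    refine RCLike.ext ?_ (by simpa using hQ.isHermitian.im_star_dotProduct_mulVec_self x)
    have := hW.re_dotProduct_pos hx
    have := hQ.re_dotProduct_nonneg x
    simp only [map_zero]
    nlinarith
  refine hx (hobs (-μ) x (mulVec_injective_of_isUnit hW.isUnit ?_) hQ0)
  have := congrArg (· *ᵥ x) hMWQ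
  simp only [add_mulVec, neg_mulVec, hQ0, neg_zero, ← mulVec_mulVec, hMv] at this
  rw [mulVec_smul, neg_smul]
  exact eq_neg_of_add_eq_zero_right this

section Complexification

variable {ι κ : Type*}

theorem Matrix.map_ofReal_mul {μ : Type*} [Fintype κ] (M : Matrix ι κ ℝ) (N : Matrix κ μ ℝ) :
    (M * N).map Complex.ofReal = M.map Complex.ofReal * N.map Complex.ofReal :=
  Matrix.map_mul (f := Complex.ofRealHom)

theorem Matrix.map_ofReal_pow [Fintype ι] [DecidableEq ι] (M : Matrix ι ι ℝ) (k : ℕ) :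
    (M ^ k).map Complex.ofReal = M.map Complex.ofReal ^ k :=
  Matrix.map_pow M Complex.ofRealHom k

theorem Matrix.conjTranspose_map_ofReal (M : Matrix ι κ ℝ) :
    (M.map Complex.ofReal)ᴴ = Mᵀ.map Complex.ofReal := by
  ext i j; simp

theorem Matrix.conjTranspose_map_ofReal_mulVec [Fintype ι] (M : Matrix ι κ ℝ) (x : ι → ℂ) :
    (M.map Complex.ofReal)ᴴ *ᵥ x = x ᵥ* M.map Complex.ofReal := by
  rw [conjTranspose_map_ofReal, transpose_map, mulVec_transpose]

theorem Matrix.re_vecMul_map_ofReal [Fintype ι] (x : ι → ℂ) (C : Matrix ι κ ℝ) (j : κ) :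
    ((x ᵥ* C.map Complex.ofReal) j).re = ((fun i => (x i).re) ᵥ* C) j := by
  simp [vecMul, dotProduct, Complex.re_sum]

theorem Matrix.im_vecMul_map_ofReal [Fintype ι] (x : ι → ℂ) (C : Matrix ι κ ℝ) (j : κ) :
    ((x ᵥ* C.map Complex.ofReal) j).im = ((fun i => (x i).im) ᵥ* C) j := by
  simp [vecMul, dotProduct, Complex.im_sum]

theorem Matrix.re_star_dotProduct_map_ofReal_mulVec [Fintype ι] (S : Matrix ι ι ℝ) (x : ι → ℂ) :
    (star x ⬝ᵥ S.map Complex.ofReal *ᵥ x).re =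
      (fun i => (x i).re) ⬝ᵥ S *ᵥ (fun i => (x i).re) +
        (fun i => (x i).im) ⬝ᵥ S *ᵥ (fun i => (x i).im) := by
  simp only [dotProduct, mulVec, Finset.mul_sum, ← Finset.sum_add_distrib, Complex.re_sum]
  refine Finset.sum_congr rfl fun i _ => Finset.sum_congr rfl fun j _ => ?_
  simp

theorem Matrix.PosDef.map_ofReal [Fintype ι] {S : Matrix ι ι ℝ} (hS : S.PosDef) :
    (S.map Complex.ofReal).PosDef := by
  have hherm : (S.map Complex.ofReal).IsHermitian := by
    rw [IsHermitian, conjTranspose_map_ofReal, ← conjTranspose_eq_transpose_of_trivial,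
      hS.isHermitian.eq]
  refine .of_dotProduct_mulVec_pos hherm fun x hx => RCLike.pos_iff.mpr
    ⟨?_, hherm.im_star_dotProduct_mulVec_self x⟩
  have hre := hS.posSemidef.dotProduct_mulVec_nonneg (fun i => (x i).re)
  have him := hS.posSemidef.dotProduct_mulVec_nonneg (fun i => (x i).im)
  simp only [star_trivial] at hre him
  rw [RCLike.re_eq_complex_re, re_star_dotProduct_map_ofReal_mulVec]
  by_cases h : (fun i => (x i).re) = 0
  · have h' : (fun i => (x i).im) ≠ 0 := fun h' =>
      hx (funext fun i => Complex.ext (congrFun h i) (congrFun h' i))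
    have := hS.dotProduct_mulVec_pos h'
    simp only [star_trivial] at this
    linarith
  · have := hS.dotProduct_mulVec_pos h
    simp only [star_trivial] at this
    linarith

end Complexification

open Topology Filter in
theorem apply_exp_smul_mul_pow_eq_zero {𝔸 F : Type*} [NormedRing 𝔸] [NormedAlgebra ℝ 𝔸]
    [CompleteSpace 𝔸] [NormedAddCommGroup F] [NormedSpace ℝ F] (L : 𝔸 →L[ℝ] F) (N : 𝔸)
    {t₀ : ℝ} (h : ∀ᶠ t in 𝓝 t₀, L (NormedSpace.exp (t • N)) = 0) (k : ℕ) :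
    L (NormedSpace.exp (t₀ • N) * N ^ k) = 0 := by
  suffices ∀ k : ℕ, (fun t : ℝ => L (NormedSpace.exp (t • N) * N ^ k)) =ᶠ[𝓝 t₀] 0 from
    (this k).eq_of_nhds
  intro k
  induction k with
  | zero => simpa [EventuallyEq] using h
  | succ k ih =>
    have hderiv : deriv (fun t : ℝ => L (NormedSpace.exp (t • N) * N ^ k)) =
        fun t => L (NormedSpace.exp (t • N) * N ^ (k + 1)) := by
      funext t
      refine (L.hasFDerivAt.comp_hasDerivAt t
        ((hasDerivAt_exp_smul_const N t).mul_const (N ^ k))).deriv.trans ?_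
      rw [mul_assoc, ← pow_succ']
    simpa [hderiv] using ih.deriv

theorem eq_zero_of_forall_vecMul_pow_mul_eq_zero {n m : ℕ} {A : Matrix (Fin n) (Fin n) ℝ}
    {B : Matrix (Fin n) (Fin m) ℝ} (hctrb : (ctrbMat A B).rank = n) {w : Fin n → ℝ}
    (hw : ∀ k : ℕ, w ᵥ* (A ^ k * B) = 0) : w = 0 :=
  eq_zero_of_vecMul_eq_zero_of_rank_eq (C := ctrbMat A B) (by rwa [Fintype.card_fin])
    (funext fun p => congrFun (hw p.1) p.2)

/-- The Popov–Belevitch–Hautus test. -/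
theorem eq_zero_of_vecMul_map_ofReal_eq_smul {n m : ℕ} {A : Matrix (Fin n) (Fin n) ℝ}
    {B : Matrix (Fin n) (Fin m) ℝ} (hctrb : (ctrbMat A B).rank = n) {x : Fin n → ℂ} {c : ℂ}
    (hA : x ᵥ* A.map Complex.ofReal = c • x) (hB : x ᵥ* B.map Complex.ofReal = 0) : x = 0 := by
  have hAk (k : ℕ) : x ᵥ* A.map Complex.ofReal ^ k = c ^ k • x := by
    induction k with
    | zero => simp
    | succ k ih => rw [pow_succ, ← vecMul_vecMul, ih, smul_vecMul, hA, smul_smul, pow_succ]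
  have hk (k : ℕ) : x ᵥ* (A ^ k * B).map Complex.ofReal = 0 := by
    rw [map_ofReal_mul, map_ofReal_pow, ← vecMul_vecMul, hAk, smul_vecMul, hB, smul_zero]
  have hre : (fun i => (x i).re) = 0 := eq_zero_of_forall_vecMul_pow_mul_eq_zero hctrb
    fun k => funext fun j => by rw [← re_vecMul_map_ofReal, hk]; rfl
  have him : (fun i => (x i).im) = 0 := eq_zero_of_forall_vecMul_pow_mul_eq_zero hctrb
    fun k => funext fun j => by rw [← im_vecMul_map_ofReal, hk]; rfl
  exact funext fun i => Complex.ext (congrFun hre i) (congrFun him i)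

section Gramian

attribute [local instance] Matrix.linftyOpNormedAddCommGroup Matrix.linftyOpNormedSpace
  Matrix.linftyOpNormedRing Matrix.linftyOpNormedAlgebra

variable {n m : ℕ} (A : Matrix (Fin n) (Fin n) ℝ) (B : Matrix (Fin n) (Fin m) ℝ)

noncomputable def gramianIntegrand (t : ℝ) : Matrix (Fin n) (Fin n) ℝ :=
  NormedSpace.exp ((-t) • A) * B * Bᵀ * NormedSpace.exp ((-t) • Aᵀ)

theorem gramianIntegrand_eq_mul_transpose (t : ℝ) :
    gramianIntegrand A B t =
      NormedSpace.exp ((-t) • A) * B * (NormedSpace.exp ((-t) • A) * B)ᵀ := by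
  rw [gramianIntegrand, transpose_mul, ← exp_transpose, transpose_smul, Matrix.mul_assoc]

theorem hasDerivAt_gramianIntegrand (t : ℝ) :
    HasDerivAt (gramianIntegrand A B)
      (-(A * gramianIntegrand A B t + gramianIntegrand A B t * Aᵀ)) t := by
  have hF : gramianIntegrand A B =
      fun s => NormedSpace.exp (s • -A) * (B * Bᵀ) * NormedSpace.exp (s • -Aᵀ) := by
    funext s
    simp only [gramianIntegrand, neg_smul, smul_neg, Matrix.mul_assoc]
  rw [hF]
  refine (((hasDerivAt_exp_smul_const' (-A) t).mul_const (B * Bᵀ)).mul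
    (hasDerivAt_exp_smul_const (-Aᵀ) t)).congr_deriv ?_
  simp only [neg_mul, mul_neg, Matrix.mul_assoc]
  abel

theorem continuous_gramianIntegrand : Continuous (gramianIntegrand A B) :=
  continuous_iff_continuousAt.2 fun t => (hasDerivAt_gramianIntegrand A B t).continuousAt

theorem gramian_eq_intervalIntegral (T₀ : ℝ) :
    gramian A B T₀ = ∫ t in (0:ℝ)..T₀, gramianIntegrand A B t := by
  ext i j
  let entry : Matrix (Fin n) (Fin n) ℝ →L[ℝ] ℝ :=
    LinearMap.toContinuousLinearMap (Matrix.entryLinearMap ℝ ℝ i j)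
  exact (entry.intervalIntegral_comp_comm (μ := volume)
    ((continuous_gramianIntegrand A B).intervalIntegrable 0 T₀))

theorem gramian_lyapunov (T₀ : ℝ) :
    A * gramian A B T₀ + gramian A B T₀ * Aᵀ = B * Bᵀ - gramianIntegrand A B T₀ := by
  let L : Matrix (Fin n) (Fin n) ℝ →L[ℝ] Matrix (Fin n) (Fin n) ℝ :=
    ContinuousLinearMap.mul ℝ _ A + (ContinuousLinearMap.mul ℝ _).flip Aᵀ
  have hF := continuous_gramianIntegrand A B
  have hFTC : ∫ t in (0:ℝ)..T₀, -L (gramianIntegrand A B t) =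
      gramianIntegrand A B T₀ - gramianIntegrand A B 0 :=
    intervalIntegral.integral_eq_sub_of_hasDerivAt
      (fun t _ => hasDerivAt_gramianIntegrand A B t)
      ((L.continuous.comp hF).neg.intervalIntegrable 0 T₀)
  calc A * gramian A B T₀ + gramian A B T₀ * Aᵀ
      = L (∫ t in (0:ℝ)..T₀, gramianIntegrand A B t) := by
        rw [gramian_eq_intervalIntegral]; rfl
    _ = ∫ t in (0:ℝ)..T₀, L (gramianIntegrand A B t) :=
        (L.intervalIntegral_comp_comm (hF.intervalIntegrable 0 T₀)).symm
    _ = -(gramianIntegrand A B T₀ - gramianIntegrand A B 0) := by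
        rw [← hFTC, intervalIntegral.integral_neg, neg_neg]
    _ = B * Bᵀ - gramianIntegrand A B T₀ := by
        simp [gramianIntegrand]

theorem gramianIntegrand_transpose (t : ℝ) :
    (gramianIntegrand A B t)ᵀ = gramianIntegrand A B t := by
  rw [gramianIntegrand_eq_mul_transpose, transpose_mul, transpose_transpose]

theorem gramian_transpose (T₀ : ℝ) : (gramian A B T₀)ᵀ = gramian A B T₀ := by
  ext i j
  show ∫ t in (0:ℝ)..T₀, gramianIntegrand A B t j i = ∫ t in (0:ℝ)..T₀, gramianIntegrand A B t i j
  simp_rw [← transpose_apply (gramianIntegrand A B _) i j, gramianIntegrand_transpose]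

theorem dotProduct_gramianIntegrand_mulVec (t : ℝ) (y : Fin n → ℝ) :
    y ⬝ᵥ gramianIntegrand A B t *ᵥ y =
      (y ᵥ* (NormedSpace.exp ((-t) • A) * B)) ⬝ᵥ (y ᵥ* (NormedSpace.exp ((-t) • A) * B)) := by
  rw [gramianIntegrand_eq_mul_transpose, ← mulVec_mulVec, dotProduct_mulVec, mulVec_transpose]

theorem dotProduct_gramian_mulVec (T₀ : ℝ) (y : Fin n → ℝ) :
    y ⬝ᵥ gramian A B T₀ *ᵥ y = ∫ t in (0:ℝ)..T₀, y ⬝ᵥ gramianIntegrand A B t *ᵥ y := by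
  let q : Matrix (Fin n) (Fin n) ℝ →L[ℝ] ℝ := LinearMap.toContinuousLinearMap
    { toFun := fun X => y ⬝ᵥ X *ᵥ y
      map_add' := fun X Y => by rw [add_mulVec, dotProduct_add]
      map_smul' := fun c X => by rw [smul_mulVec, dotProduct_smul]; rfl }
  rw [gramian_eq_intervalIntegral]
  exact (q.intervalIntegral_comp_comm
    ((continuous_gramianIntegrand A B).intervalIntegrable 0 T₀)).symm

open Topology Filter Set in
theorem posDef_gramian (hctrb : (ctrbMat A B).rank = n) {T₀ : ℝ} (hT : 0 < T₀) :
    (gramian A B T₀).PosDef := by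
  refine .of_dotProduct_mulVec_pos (gramian_transpose A B T₀) fun y hy => ?_
  rw [star_trivial, dotProduct_gramian_mulVec]
  by_contra hpos
  set g : ℝ → Fin m → ℝ := fun t => y ᵥ* (NormedSpace.exp ((-t) • A) * B)
  have hsq (v : Fin m → ℝ) : 0 ≤ v ⬝ᵥ v := by simpa using dotProduct_star_self_nonneg v
  have hg0 : ∀ t ∈ Icc 0 T₀, g t = 0 := by
    by_contra! ⟨t, ht, hgt⟩
    refine hpos (intervalIntegral.integral_pos hT (Continuous.continuousOn ?_)
      (fun s _ => ?_) ⟨t, ht, ?_⟩)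
    · exact continuous_const.dotProduct
        ((continuous_gramianIntegrand A B).matrix_mulVec continuous_const)
    · rw [dotProduct_gramianIntegrand_mulVec]
      exact hsq (g s)
    · rw [dotProduct_gramianIntegrand_mulVec]
      exact (hsq (g t)).lt_of_ne (Ne.symm (dotProduct_self_eq_zero.not.mpr hgt))
  let L : Matrix (Fin n) (Fin n) ℝ →L[ℝ] (Fin m → ℝ) := LinearMap.toContinuousLinearMap
    { toFun := fun X => y ᵥ* (X * B)
      map_add' := fun X Y => by rw [Matrix.add_mul, vecMul_add]
      map_smul' := fun c X => by rw [Matrix.smul_mul, vecMul_smul]; rfl }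
  have hL : ∀ᶠ s in 𝓝 (-(T₀ / 2)), L (NormedSpace.exp (s • A)) = 0 := by
    filter_upwards [Icc_mem_nhds (a := -T₀) (b := 0) (by linarith) (by linarith)] with s hs
    show y ᵥ* (NormedSpace.exp (s • A) * B) = 0
    simpa [g] using hg0 (-s) ⟨by linarith [hs.2], by linarith [hs.1]⟩
  apply hy
  refine vecMul_injective_of_isUnit (isUnit_exp (-(T₀ / 2) • A)) ?_
  simp only [zero_vecMul]
  refine eq_zero_of_forall_vecMul_pow_mul_eq_zero hctrb fun k => ?_
  rw [vecMul_vecMul, ← Matrix.mul_assoc]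
  exact apply_exp_smul_mul_pow_eq_zero L A hL k

end Gramian

theorem closedLoop_stable_of_controllable {n m : ℕ}
    (A : Matrix (Fin n) (Fin n) ℝ) (B : Matrix (Fin n) (Fin m) ℝ)
    (hctrb : (ctrbMat A B).rank = n) (T₀ : ℝ) (hT : 0 < T₀) :
    IsStableMatrix (A - B * Bᵀ * (gramian A B T₀)⁻¹) := by
  set W := gramian A B T₀
  set P := NormedSpace.exp ((-T₀) • A) * B
  have hW : W.PosDef := posDef_gramian A B hctrb hT
  have hlyap : (A - B * Bᵀ * W⁻¹) * W + W * (A - B * Bᵀ * W⁻¹)ᵀ = -(B * Bᵀ + P * Pᵀ) :=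
    lyapunov_sub_mul_nonsing_inv ((isUnit_iff_isUnit_det W).mp hW.isUnit)
      (gramian_transpose A B T₀) (by rw [transpose_mul, transpose_transpose])
      (by rw [gramian_lyapunov, gramianIntegrand_eq_mul_transpose])
  intro μ v hv hMv
  refine re_lt_zero_of_lyapunov hW.map_ofReal
    ((posSemidef_self_mul_conjTranspose (B.map Complex.ofReal)).add
      (posSemidef_self_mul_conjTranspose (P.map Complex.ofReal))) ?_ ?_ hv hMv
  · simpa [Matrix.map_add _ Complex.ofReal_add, Matrix.map_neg _ Complex.ofReal_neg,
      map_ofReal_mul, conjTranspose_map_ofReal] using congrArg (·.map Complex.ofReal) hlyap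
  · intro c x hMx hQx
    have hBx : x ᵥ* B.map Complex.ofReal = 0 := by
      rw [← conjTranspose_map_ofReal_mulVec, ← self_mul_conjTranspose_mulVec_eq_zero]
      exact (posSemidef_self_mul_conjTranspose _).mulVec_eq_zero_of_add_mulVec_eq_zero
        (posSemidef_self_mul_conjTranspose _) hQx
    refine eq_zero_of_vecMul_map_ofReal_eq_smul hctrb (c := c) ?_ hBx
    rw [conjTranspose_map_ofReal_mulVec] at hMx
    simpa [Matrix.map_sub _ Complex.ofReal_sub, map_ofReal_mul, vecMul_sub, ← vecMul_vecMul,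
      hBx] using hMx
end

section
/- Let A ∈ ℝ^{n×n}, B ∈ ℝ^{n×m} with (A,B) controllable. If v ∈ ℂⁿ is nonzero and satisfies Aᵀ v = λ v for some λ ∈ ℂ and Bᵀ v = 0, then a contradiction follows; i.e., no nonzero common left eigenvector of A lies in the kernel of Bᵀ (the PBH test, one direction). -/
/-!
A left eigenvector `v` of `A` with `vᵀ B = 0` satisfies `vᵀ Aᵏ B = λᵏ vᵀ B = 0` for every `k`, so
`vᵀ` kills every column of the controllability matrix. Full row rank makes the rows of that matrix
linearly independent over `ℝ`, and linear independence survives the base change to `ℂ`, hence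
`v = 0`.
-/

open Matrix

namespace Matrix

theorem linearIndependent_row_of_rank_eq_card {K m n : Type*} [Field K] [Fintype m] [Fintype n]
    {M : Matrix m n K} (hM : M.rank = Fintype.card m) : LinearIndependent K M.row := by
  rw [linearIndependent_iff_card_eq_finrank_span, Set.finrank, ← rank_eq_finrank_span_row, hM]

theorem vecMul_map_algebraMap_injective_of_rank_eq_card {K L m n : Type*} [Field K] [Field L]
    [Algebra K L] [Fintype m] [Fintype n] {M : Matrix m n K} (hM : M.rank = Fintype.card m) :
    Function.Injective (M.map (algebraMap K L)).vecMul :=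
  vecMul_injective_iff.2 <|
    linearIndependent_algebraMap_comp_iff.2 (linearIndependent_row_of_rank_eq_card hM)

theorem vecMul_pow_eq_smul_of_vecMul_eq_smul {R n : Type*} [CommSemiring R] [Fintype n]
    [DecidableEq n] {A : Matrix n n R} {v : n → R} {c : R} (hv : v ᵥ* A = c • v) (k : ℕ) :
    v ᵥ* A ^ k = c ^ k • v := by
  induction k with
  | zero => simp
  | succ k ih => rw [pow_succ, ← vecMul_vecMul, ih, smul_vecMul, hv, smul_smul, pow_succ]

theorem vecMul_pow_mul_eq_zero {R n m : Type*} [CommSemiring R] [Fintype n]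
    [DecidableEq n] {A : Matrix n n R} {B : Matrix n m R} {v : n → R} {c : R}
    (hA : v ᵥ* A = c • v) (hB : v ᵥ* B = 0) (k : ℕ) : v ᵥ* (A ^ k * B) = 0 := by
  rw [← vecMul_vecMul, vecMul_pow_eq_smul_of_vecMul_eq_smul hA, smul_vecMul, hB, smul_zero]

end Matrix

theorem ctrbMat_map_apply {R : Type*} [Semiring R] {n m : ℕ} (f : ℝ →+* R)
    (A : Matrix (Fin n) (Fin n) ℝ) (B : Matrix (Fin n) (Fin m) ℝ) (i : Fin n)
    (p : Fin n × Fin m) :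
    (ctrbMat A B).map f i p = (A.map f ^ (p.1 : ℕ) * B.map f) i p.2 := by
  rw [← RingHom.mapMatrix_apply, ← map_pow, RingHom.mapMatrix_apply, ← Matrix.map_mul]
  rfl

theorem vecMul_ctrbMat_map_eq_zero {R : Type*} [CommSemiring R] {n m : ℕ} (f : ℝ →+* R)
    {A : Matrix (Fin n) (Fin n) ℝ} {B : Matrix (Fin n) (Fin m) ℝ} {v : Fin n → R} {c : R}
    (hA : v ᵥ* A.map f = c • v) (hB : v ᵥ* B.map f = 0) :
    v ᵥ* (ctrbMat A B).map f = 0 := by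
  ext p
  simpa only [vecMul, dotProduct, ctrbMat_map_apply, Pi.zero_apply] using
    congrFun (vecMul_pow_mul_eq_zero hA hB p.1) p.2

/-- PBH test (one direction): a controllable pair admits no nonzero common left
eigenvector of `A` lying in the kernel of `Bᵀ`. -/
theorem pbh_no_common_left_eigenvector {n m : ℕ}
    (A : Matrix (Fin n) (Fin n) ℝ) (B : Matrix (Fin n) (Fin m) ℝ)
    (hctrb : (ctrbMat A B).rank = n)
    (v : Fin n → ℂ) (hv : v ≠ 0) (lam : ℂ)
    (heig : (Aᵀ.map (Complex.ofReal)) *ᵥ v = lam • v)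
    (hker : (Bᵀ.map (Complex.ofReal)) *ᵥ v = 0) :
    False := by
  have hA : v ᵥ* A.map (algebraMap ℝ ℂ) = lam • v := by
    rwa [← mulVec_transpose, ← transpose_map]
  have hB : v ᵥ* B.map (algebraMap ℝ ℂ) = 0 := by
    rwa [← mulVec_transpose, ← transpose_map]
  have hinj : Function.Injective ((ctrbMat A B).map (algebraMap ℝ ℂ)).vecMul :=
    vecMul_map_algebraMap_injective_of_rank_eq_card (by rwa [Fintype.card_fin])
  exact hv <| hinj <| (vecMul_ctrbMat_map_eq_zero _ hA hB).trans (zero_vecMul _).symm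
end
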